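/- Let G be a finitely generated nilpotent group and let G_i denote its derived series (G_0 = G, G_{i+1} = [G_i, G_i]). If i is the largest index such that G_i has finite index in G, then the abelianization G_i/G_{i+1} is an abelian group of positive rank (i.e., it is infinite). -/

import Mathlib

/-!
If `Gᵢ` has finite index in `G` and its abelianization `Gᵢ / Gᵢ₊₁` were finite, then `Gᵢ₊₁`
would have finite index in `Gᵢ`, hence in `G`, contradicting the maximality of `i`.
-/

namespace Subgroup

variable {G : Type*} [Group G]

theorem finiteIndex_commutator_self (H : Subgroup G) [H.FiniteIndex]
    [Finite (Abelianization H)] : ⁅H, H⁆.FiniteIndex := by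
  have : Finite (H ⧸ _root_.commutator H) := ‹Finite (Abelianization H)›
  have : (_root_.commutator H).FiniteIndex := finiteIndex_of_finite_quotient
  rw [← H.map_subtype_commutator, finiteIndex_iff, index_map_subtype]
  exact mul_ne_zero FiniteIndex.index_ne_zero FiniteIndex.index_ne_zero

end Subgroup

theorem finiteIndex_derivedSeries_succ {G : Type*} [Group G] (i : ℕ)
    [(derivedSeries G i).FiniteIndex] [Finite (Abelianization (derivedSeries G i))] :
    (derivedSeries G (i + 1)).FiniteIndex :=
  derivedSeries_succ G i ▸ (derivedSeries G i).finiteIndex_commutator_self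

theorem stmt0_general (G : Type*) [Group G] (i : ℕ)
    (hfin : (derivedSeries G i).FiniteIndex)
    (hmax : ∀ j : ℕ, (derivedSeries G j).FiniteIndex → j ≤ i) :
    Infinite (Abelianization (derivedSeries G i)) := by
  by_contra hinf
  have : Finite (Abelianization (derivedSeries G i)) := not_infinite_iff_finite.mp hinf
  have := hmax (i + 1) (finiteIndex_derivedSeries_succ i)
  omega

/-- Let `G` be a finitely generated infinite nilpotent group and let
`derivedSeries G i` denote its derived series.  If `i` is the largest index such
that `derivedSeries G i` has finite index in `G`, then the abelianization
`G_i/G_{i+1}` is an abelian group of positive rank, i.e. it is infinite. -/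
theorem stmt0 (G : Type*) [Group G] [Group.FG G] [Infinite G]
    [Group.IsNilpotent G] (i : ℕ)
    (hfin : (derivedSeries G i).FiniteIndex)
    (hmax : ∀ j : ℕ, (derivedSeries G j).FiniteIndex → j ≤ i) :
    Infinite (Abelianization (derivedSeries G i)) :=
  stmt0_general G i hfin hmax
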